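/- arXiv:math/0509380 — 4 statements merged into one kernel-verified Lean document; each statement's English description precedes it below -/
import Mathlib

section
/- Let σ_{k,l}, for k ∈ ℕ₀ and l = 1,...,a_k, be non-negative moment measures on [0,∞). Then the functional T on ℂ[x_1,...,x_d] defined by T(f) = Σ_{k=0}^{deg f} Σ_{l=1}^{a_k} ∫_0^∞ f_{k,l}(r) r^{-k} dσ_{k,l}(r) is pseudo-positive definite, i.e., for each (k,l), T_{k,l}(p·p*) ≥ 0 and T_{k,l}(t·p·p*) ≥ 0 for all univariate polynomials p, where T_{k,l}(p) = T(p(|x|²)Y_{k,l}(x)). -/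
open MvPolynomial MeasureTheory ComplexOrder

noncomputable def mvLaplacian {d : ℕ} (P : MvPolynomial (Fin d) ℝ) : MvPolynomial (Fin d) ℝ :=
  ∑ i, pderiv i (pderiv i P)

lemma eval_homog {d n : ℕ} {φ : MvPolynomial (Fin d) ℝ} (hφ : φ.IsHomogeneous n)
    (c : ℝ) (x : Fin d → ℝ) :
    eval (fun i => c * x i) φ = c ^ n * eval x φ := by
  rw [eval_eq', eval_eq', Finset.mul_sum]
  apply Finset.sum_congr rfl
  intro m hm
  have hdeg : ∑ i, m i = n := by
    have h := hφ (mem_support_iff.mp hm)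
    simpa [Finsupp.weight, Finsupp.linearCombination, Finsupp.sum_fintype] using h
  calc MvPolynomial.coeff m φ * ∏ i, (c * x i) ^ m i
      = MvPolynomial.coeff m φ * ((∏ i, c ^ m i) * ∏ i, x i ^ m i) := by
        rw [← Finset.prod_mul_distrib]; simp [mul_pow]
    _ = c ^ n * (MvPolynomial.coeff m φ * ∏ i, x i ^ m i) := by
        rw [Finset.prod_pow_eq_pow_sum, hdeg]; ring

lemma sphere_sum_sq {d : ℕ} (θ : Metric.sphere (0 : EuclideanSpace ℝ (Fin d)) 1) :
    ∑ i, ((θ : EuclideanSpace ℝ (Fin d)) i)^2 = 1 := by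
  have h : ‖(θ : EuclideanSpace ℝ (Fin d))‖ = 1 := by simpa using θ.2
  have h2 := EuclideanSpace.norm_eq (θ : EuclideanSpace ℝ (Fin d))
  rw [h] at h2
  simp only [Real.norm_eq_abs, sq_abs] at h2
  exact (Real.sqrt_eq_one.mp h2.symm)

lemma key_eval {d k : ℕ} (Yp : MvPolynomial (Fin d) ℝ) (hY : Yp.IsHomogeneous k)
    (q : Polynomial ℂ) (r : ℝ) (θ : Metric.sphere (0 : EuclideanSpace ℝ (Fin d)) 1) :
    MvPolynomial.eval (fun i => ((r * (θ : EuclideanSpace ℝ (Fin d)) i : ℝ) : ℂ))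
      ((Polynomial.aeval (∑ i, (X i : MvPolynomial (Fin d) ℂ) ^ 2)) q *
        MvPolynomial.map (algebraMap ℝ ℂ) Yp)
    = q.eval ((r^2 : ℝ) : ℂ) *
        ((r ^ k * eval (fun i => (θ : EuclideanSpace ℝ (Fin d)) i) Yp : ℝ) : ℂ) := by
  set pt : Fin d → ℂ := fun i => ((r * (θ : EuclideanSpace ℝ (Fin d)) i : ℝ) : ℂ) with hpt
  rw [map_mul]
  congr 1
  · rw [Polynomial.aeval_def, Polynomial.hom_eval₂]
    have h1 : (eval pt).comp (algebraMap ℂ (MvPolynomial (Fin d) ℂ)) = RingHom.id ℂ := by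
      ext c; simp
    have h2 : eval pt (∑ i, (X i : MvPolynomial (Fin d) ℂ) ^ 2) = ((r^2 : ℝ) : ℂ) := by
      rw [map_sum]
      simp only [map_pow, eval_X, hpt]
      have hre : ∑ i, (r * (θ : EuclideanSpace ℝ (Fin d)) i)^2 = r^2 := by
        simp [mul_pow, ← Finset.mul_sum, sphere_sum_sq θ]
      rw [← hre]
      push_cast
      ring
    rw [h1, h2]
    rfl
  · rw [eval_map]
    have hcomp := eval₂_comp_left (algebraMap ℝ ℂ) (RingHom.id ℝ)
      (fun i => r * (θ : EuclideanSpace ℝ (Fin d)) i) Yp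
    rw [RingHom.comp_id] at hcomp
    rw [show pt = (algebraMap ℝ ℂ) ∘ (fun i => r * (θ : EuclideanSpace ℝ (Fin d)) i) from rfl,
      ← hcomp]
    have h3 : eval₂ (RingHom.id ℝ) (fun i => r * (θ : EuclideanSpace ℝ (Fin d)) i) Yp
        = eval (fun i => r * (θ : EuclideanSpace ℝ (Fin d)) i) Yp := rfl
    rw [h3, eval_homog hY]
    simp

lemma conj_eval (p : Polynomial ℂ) (t : ℝ) :
    (p.map (starRingEnd ℂ)).eval (t : ℂ) = (starRingEnd ℂ) (p.eval (t : ℂ)) := by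
  rw [Polynomial.eval_map]
  have h : p.eval (t:ℂ) = Polynomial.eval₂ (RingHom.id ℂ) (t:ℂ) p := rfl
  rw [h, Polynomial.hom_eval₂]
  simp


/-- Given non-negative moment measures `σ_{k,l}` on `[0,∞)`, the functional
`T(f) = Σ_{k=0}^{deg f} Σ_l ∫₀^∞ f_{k,l}(r) r^{-k} dσ_{k,l}(r)` on `ℂ[x₁,…,x_d]` is
pseudo-positive definite: `T_{k,l}(p* p) ≥ 0` and `T_{k,l}(t·p* p) ≥ 0` for all univariate `p`,
where `T_{k,l}(p) = T(p(|x|²) Y_{k,l}(x))`. -/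
theorem pseudoPositiveDefinite_of_componentMeasures {d : ℕ} (a : ℕ → ℕ)
    (Y : (k : ℕ) → Fin (a k) → MvPolynomial (Fin d) ℝ)
    (hY_hom : ∀ k l, (Y k l).IsHomogeneous k)
    (hY_harm : ∀ k l, mvLaplacian (Y k l) = 0)
    (hY_orth : ∀ (k k' : ℕ) (l : Fin (a k)) (l' : Fin (a k')),
      (∫ θ : Metric.sphere (0 : EuclideanSpace ℝ (Fin d)) 1,
          (eval (fun i => (θ : EuclideanSpace ℝ (Fin d)) i) (Y k l)) *
          (eval (fun i => (θ : EuclideanSpace ℝ (Fin d)) i) (Y k' l'))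
        ∂(volume : Measure (EuclideanSpace ℝ (Fin d))).toSphere)
      = if (⟨k, l⟩ : Σ n, Fin (a n)) = ⟨k', l'⟩ then 1 else 0)
    (σ : (k : ℕ) → Fin (a k) → Measure ℝ)
    (hσ_supp : ∀ k l, σ k l (Set.Iio 0) = 0)
    (hσ_moment : ∀ k l (n : ℕ), Integrable (fun r : ℝ => r ^ n) (σ k l))
    (T : MvPolynomial (Fin d) ℂ → ℂ)
    (hT : ∀ f : MvPolynomial (Fin d) ℂ,
      T f = ∑ k ∈ Finset.range (f.totalDegree + 1), ∑ l : Fin (a k),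
        ∫ r : ℝ, ((r : ℂ) ^ (-(k : ℤ))) *
          (∫ θ : Metric.sphere (0 : EuclideanSpace ℝ (Fin d)) 1,
            (MvPolynomial.eval (fun i => ((r * (θ : EuclideanSpace ℝ (Fin d)) i : ℝ) : ℂ)) f) *
            ((eval (fun i => (θ : EuclideanSpace ℝ (Fin d)) i) (Y k l) : ℝ) : ℂ)
          ∂(volume : Measure (EuclideanSpace ℝ (Fin d))).toSphere) ∂(σ k l)) :
    ∀ (k : ℕ) (l : Fin (a k)) (p : Polynomial ℂ),
      0 ≤ T ((Polynomial.aeval (∑ i, (X i : MvPolynomial (Fin d) ℂ) ^ 2))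
              ((p.map (starRingEnd ℂ)) * p) *
             MvPolynomial.map (algebraMap ℝ ℂ) (Y k l)) ∧
      0 ≤ T ((Polynomial.aeval (∑ i, (X i : MvPolynomial (Fin d) ℂ) ^ 2))
              (Polynomial.X * ((p.map (starRingEnd ℂ)) * p)) *
             MvPolynomial.map (algebraMap ℝ ℂ) (Y k l)) := by
  intro k l p
  have key : ∀ (q : Polynomial ℂ) (c : ℝ → ℝ), (∀ r, 0 ≤ c r) →
      (∀ r : ℝ, q.eval ((r^2 : ℝ) : ℂ) = ((c r : ℝ) : ℂ)) →
      0 ≤ T ((Polynomial.aeval (∑ i, (X i : MvPolynomial (Fin d) ℂ) ^ 2)) q *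
             MvPolynomial.map (algebraMap ℝ ℂ) (Y k l)) := by
    intro q c hc hqc
    rw [hT]
    apply Finset.sum_nonneg
    intro k' _
    apply Finset.sum_nonneg
    intro l' _
    -- compute the inner (sphere) integral
    have hin : ∀ r : ℝ,
        (∫ θ : Metric.sphere (0 : EuclideanSpace ℝ (Fin d)) 1,
            (MvPolynomial.eval (fun i => ((r * (θ : EuclideanSpace ℝ (Fin d)) i : ℝ) : ℂ))
              ((Polynomial.aeval (∑ i, (X i : MvPolynomial (Fin d) ℂ) ^ 2)) q *
                MvPolynomial.map (algebraMap ℝ ℂ) (Y k l))) *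
            ((eval (fun i => (θ : EuclideanSpace ℝ (Fin d)) i) (Y k' l') : ℝ) : ℂ)
          ∂(volume : Measure (EuclideanSpace ℝ (Fin d))).toSphere)
        = ((c r * r ^ k : ℝ) : ℂ) *
            (if (⟨k, l⟩ : Σ n, Fin (a n)) = ⟨k', l'⟩ then 1 else 0) := by
      intro r
      have hfun : (fun θ : Metric.sphere (0 : EuclideanSpace ℝ (Fin d)) 1 =>
          (MvPolynomial.eval (fun i => ((r * (θ : EuclideanSpace ℝ (Fin d)) i : ℝ) : ℂ))
              ((Polynomial.aeval (∑ i, (X i : MvPolynomial (Fin d) ℂ) ^ 2)) q *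
                MvPolynomial.map (algebraMap ℝ ℂ) (Y k l))) *
            ((eval (fun i => (θ : EuclideanSpace ℝ (Fin d)) i) (Y k' l') : ℝ) : ℂ))
          = fun (θ : Metric.sphere (0 : EuclideanSpace ℝ (Fin d)) 1) => ((c r * r ^ k : ℝ) : ℂ) *
              (((eval (fun i => (θ : EuclideanSpace ℝ (Fin d)) i) (Y k l)) *
                (eval (fun i => (θ : EuclideanSpace ℝ (Fin d)) i) (Y k' l')) : ℝ) : ℂ) := by
        funext θ
        rw [key_eval (Y k l) (hY_hom k l) q r θ, hqc r]
        push_cast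
        ring
      rw [hfun, integral_const_mul]
      have h4 : (∫ θ : Metric.sphere (0 : EuclideanSpace ℝ (Fin d)) 1,
          (((eval (fun i => (θ : EuclideanSpace ℝ (Fin d)) i) (Y k l)) *
            (eval (fun i => (θ : EuclideanSpace ℝ (Fin d)) i) (Y k' l')) : ℝ) : ℂ)
          ∂(volume : Measure (EuclideanSpace ℝ (Fin d))).toSphere)
          = (((∫ θ : Metric.sphere (0 : EuclideanSpace ℝ (Fin d)) 1,
              (eval (fun i => (θ : EuclideanSpace ℝ (Fin d)) i) (Y k l)) *
              (eval (fun i => (θ : EuclideanSpace ℝ (Fin d)) i) (Y k' l'))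
            ∂(volume : Measure (EuclideanSpace ℝ (Fin d))).toSphere) : ℝ) : ℂ) :=
        integral_ofReal
      rw [h4, hY_orth k k' l l']
      split_ifs <;> simp
    by_cases hkl : (⟨k, l⟩ : Σ n, Fin (a n)) = ⟨k', l'⟩
    · obtain ⟨rfl, hl⟩ := Sigma.mk.inj_iff.mp hkl
      simp only [if_pos hkl] at hin
      have hfun2 : (fun r : ℝ => ((r : ℂ) ^ (-(k : ℤ))) *
          (∫ θ : Metric.sphere (0 : EuclideanSpace ℝ (Fin d)) 1,
            (MvPolynomial.eval (fun i => ((r * (θ : EuclideanSpace ℝ (Fin d)) i : ℝ) : ℂ))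
              ((Polynomial.aeval (∑ i, (X i : MvPolynomial (Fin d) ℂ) ^ 2)) q *
                MvPolynomial.map (algebraMap ℝ ℂ) (Y k l))) *
            ((eval (fun i => (θ : EuclideanSpace ℝ (Fin d)) i) (Y k l') : ℝ) : ℂ)
          ∂(volume : Measure (EuclideanSpace ℝ (Fin d))).toSphere))
          = fun r : ℝ => (((r ^ (-(k : ℤ)) * (c r * r ^ k) : ℝ)) : ℂ) := by
        funext r
        rw [hin r, mul_one]
        push_cast
        ring
      rw [hfun2]
      have h5 : ∫ r : ℝ, (((r ^ (-(k : ℤ)) * (c r * r ^ k) : ℝ)) : ℂ) ∂(σ k l')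
          = ((∫ r : ℝ, (r ^ (-(k : ℤ)) * (c r * r ^ k) : ℝ) ∂(σ k l') : ℝ) : ℂ) :=
        integral_ofReal
      rw [h5]
      rw [Complex.zero_le_real]
      apply integral_nonneg
      intro r
      show 0 ≤ r ^ (-(k : ℤ)) * (c r * r ^ k)
      rw [zpow_neg, zpow_natCast]
      have : (r ^ k)⁻¹ * (c r * r ^ k) = c r * ((r ^ k)⁻¹ * r ^ k) := by ring
      rw [this]
      rcases eq_or_ne (r ^ k) 0 with h | h
      · simp [h]
      · rw [inv_mul_cancel₀ h, mul_one]; exact hc r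
    · simp only [if_neg hkl, mul_zero] at hin
      have hfun2 : (fun r : ℝ => ((r : ℂ) ^ (-(k' : ℤ))) *
          (∫ θ : Metric.sphere (0 : EuclideanSpace ℝ (Fin d)) 1,
            (MvPolynomial.eval (fun i => ((r * (θ : EuclideanSpace ℝ (Fin d)) i : ℝ) : ℂ))
              ((Polynomial.aeval (∑ i, (X i : MvPolynomial (Fin d) ℂ) ^ 2)) q *
                MvPolynomial.map (algebraMap ℝ ℂ) (Y k l))) *
            ((eval (fun i => (θ : EuclideanSpace ℝ (Fin d)) i) (Y k' l') : ℝ) : ℂ)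
          ∂(volume : Measure (EuclideanSpace ℝ (Fin d))).toSphere))
          = fun _ : ℝ => (0 : ℂ) := by
        funext r
        rw [hin r, mul_zero]
      rw [hfun2, integral_zero]
  constructor
  · exact key (p.map (starRingEnd ℂ) * p)
      (fun r => Complex.normSq (p.eval ((r^2 : ℝ) : ℂ)))
      (fun r => Complex.normSq_nonneg _)
      (fun r => by
        rw [Polynomial.eval_mul, conj_eval]
        rw [Complex.normSq_eq_conj_mul_self])
  · exact key (Polynomial.X * (p.map (starRingEnd ℂ) * p))
      (fun r => r ^ 2 * Complex.normSq (p.eval ((r^2 : ℝ) : ℂ)))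
      (fun r => mul_nonneg (sq_nonneg r) (Complex.normSq_nonneg _))
      (fun r => by
        rw [Polynomial.eval_mul, Polynomial.eval_X, Polynomial.eval_mul, conj_eval]
        push_cast
        rw [Complex.normSq_eq_conj_mul_self])
end

section
/- Let ν be a non-negative measure on [a,b] ⊂ ℝ whose support has more than s points, and let ν^{(s)} = Σ_{j=1}^s α_j δ_{t_j} be its Gauss-Jacobi quadrature measure of order s (exact on polynomials of degree ≤ 2s-1, nodes in (a,b)). If f : [a,b] → ℝ is 2s-times continuously differentiable with f^{(2s)}(t) ≥ 0 on (a,b), then ∫_a^b f dν^{(s)} ≤ ∫_a^b f dν. -/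
/-!
Let `H` be the Hermite interpolant of `f` at the nodes, matching values and first derivatives,
of degree `< 2s`. The Hermite remainder formula
`f x - H x = f⁽²ˢ⁾(ξ) / (2s)! * ∏ⱼ (x - tⱼ)²`, obtained by applying Rolle's theorem repeatedly
to `f - H - c ∏ⱼ (X - tⱼ)²`, shows `H ≤ f` on `[a, b]`. Exactness of the quadrature on `H`
then gives `∑ αⱼ f(tⱼ) = ∑ αⱼ H(tⱼ) = ∫ H dν ≤ ∫ f dν`.
-/

open MeasureTheory Polynomial Set
open scoped Finset Nat

namespace Polynomial

section NormedField

variable {𝕜 : Type*} [NontriviallyNormedField 𝕜]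

theorem contDiff_eval (p : 𝕜[X]) (n : WithTop ℕ∞) : ContDiff 𝕜 n fun x => p.eval x :=
  p.contDiff_aeval n

theorem iteratedDeriv_eval (p : 𝕜[X]) (n : ℕ) :
    iteratedDeriv n (fun x => p.eval x) = fun x => (derivative^[n] p).eval x := by
  induction n with
  | zero => simp
  | succ n ih =>
    ext x
    rw [iteratedDeriv_succ, ih, Function.iterate_succ_apply']
    exact Polynomial.deriv _

theorem iteratedDeriv_eval_of_natDegree_le {p : 𝕜[X]} {n : ℕ} (hp : p.natDegree ≤ n) (x : 𝕜) :
    iteratedDeriv n (fun x => p.eval x) x = n ! * p.coeff n := by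
  have hd : (derivative^[n] p).natDegree = 0 := by
    have := p.natDegree_iterate_derivative n
    omega
  rw [iteratedDeriv_eval, eq_C_of_natDegree_eq_zero hd, coeff_iterate_derivative]
  simp [Nat.descFactorial_self, nsmul_eq_mul]

end NormedField

section Hermite

variable {K : Type*} [Field K] {ι : Type*} [Fintype ι] {t : ι → K}

theorem X_sub_C_sq_dvd {p : K[X]} {x : K} (h₀ : p.eval x = 0) (h₁ : p.derivative.eval x = 0) :
    (X - C x) ^ 2 ∣ p := by
  rcases eq_or_ne p 0 with rfl | hp
  · exact dvd_zero _
  · exact (le_rootMultiplicity_iff hp).mp ((one_lt_rootMultiplicity_iff_isRoot hp).mpr ⟨h₀, h₁⟩)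

theorem nodal_sq_dvd (ht : Function.Injective t) {p : K[X]} (h₀ : ∀ i, p.eval (t i) = 0)
    (h₁ : ∀ i, p.derivative.eval (t i) = 0) : Lagrange.nodal Finset.univ t ^ 2 ∣ p := by
  rw [Lagrange.nodal, ← Finset.prod_pow]
  exact Fintype.prod_dvd_of_coprime (fun i j hij => (pairwise_coprime_X_sub_C ht hij).pow)
    fun i => X_sub_C_sq_dvd (h₀ i) (h₁ i)

theorem natDegree_nodal_sq :
    (Lagrange.nodal Finset.univ t ^ 2).natDegree = 2 * Fintype.card ι := by
  rw [natDegree_pow, Lagrange.natDegree_nodal, Finset.card_univ, mul_comm]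

theorem eval_derivative_nodal_sq (i : ι) :
    (Lagrange.nodal Finset.univ t ^ 2).derivative.eval (t i) = 0 := by
  simp [derivative_pow, Lagrange.eval_nodal_at_node (Finset.mem_univ i)]

theorem exists_hermite_interpolant (ht : Function.Injective t) (v w : ι → K) :
    ∃ p : K[X], p.degree < ↑(2 * Fintype.card ι) ∧ (∀ i, p.eval (t i) = v i) ∧
      ∀ i, p.derivative.eval (t i) = w i := by
  set V := degreeLT K (2 * Fintype.card ι)
  let L : V →ₗ[K] (ι → K) × (ι → K) :=
    LinearMap.prod (LinearMap.pi fun i => (leval (t i)).comp V.subtype)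
      (LinearMap.pi fun i => (leval (t i)).comp (derivative.comp V.subtype))
  have hL_apply (p : V) :
      L p = (fun i => (p : K[X]).eval (t i), fun i => (p : K[X]).derivative.eval (t i)) := rfl
  -- a kernel element is divisible by `nodal ^ 2`, whose degree is too large
  have hL : Function.Injective L := by
    rw [← LinearMap.ker_eq_bot, LinearMap.ker_eq_bot']
    rintro ⟨p, hp⟩ hLp
    rw [hL_apply, Prod.mk_eq_zero] at hLp
    ext1
    refine eq_zero_of_dvd_of_degree_lt (nodal_sq_dvd ht (congrFun hLp.1) (congrFun hLp.2)) ?_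
    rw [degree_eq_natDegree (pow_ne_zero 2 Lagrange.nodal_ne_zero), natDegree_nodal_sq]
    exact mem_degreeLT.mp hp
  have hrank : Module.finrank K V = Module.finrank K ((ι → K) × (ι → K)) := by
    rw [(degreeLTEquiv K _).finrank_eq, Module.finrank_prod, Module.finrank_fintype_fun_eq_card,
      Module.finrank_fintype_fun_eq_card, Fintype.card_fin, two_mul]
  have : FiniteDimensional K V := (degreeLTEquiv K _).symm.finiteDimensional
  obtain ⟨⟨p, hp⟩, hLp⟩ :=
    (LinearMap.injective_iff_surjective_of_finrank_eq_finrank hrank).mp hL (v, w)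
  rw [hL_apply, Prod.mk.injEq] at hLp
  exact ⟨p, mem_degreeLT.mp hp, congrFun hLp.1, congrFun hLp.2⟩

end Hermite

end Polynomial

theorem exists_deriv_eq_zero_interlacing {f : ℝ → ℝ} (hf : Differentiable ℝ f) {n : ℕ}
    {e : Fin (n + 1) → ℝ} (he : StrictMono e) (hz : ∀ i, f (e i) = 0) :
    ∃ c : Fin n → ℝ, (∀ i, c i ∈ Ioo (e i.castSucc) (e i.succ)) ∧ ∀ i, deriv f (c i) = 0 := by
  choose c hc hc0 using fun i : Fin n =>
    exists_deriv_eq_zero (he i.castSucc_lt_succ) hf.continuous.continuousOn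
      ((hz _).trans (hz _).symm)
  exact ⟨c, hc, hc0⟩

theorem Finset.exists_deriv_eq_zero {f : ℝ → ℝ} (hf : Differentiable ℝ f) (Z : Finset ℝ)
    (hZ : ∀ z ∈ Z, f z = 0) :
    ∃ Z' : Finset ℝ, #Z' = #Z - 1 ∧ Disjoint Z' Z ∧
      (∀ c ∈ Z', ∃ z₁ ∈ Z, ∃ z₂ ∈ Z, c ∈ Set.Ioo z₁ z₂) ∧ ∀ c ∈ Z', deriv f c = 0 := by
  obtain hZ₀ | ⟨n, hn⟩ : #Z = 0 ∨ ∃ n, #Z = n + 1 := by cases #Z <;> simp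
  · exact ⟨∅, by simp [hZ₀], by simp, by simp, by simp⟩
  set e := Z.orderEmbOfFin hn
  have he : ∀ i, e i ∈ Z := Z.orderEmbOfFin_mem hn
  obtain ⟨c, hc, hc0⟩ := exists_deriv_eq_zero_interlacing hf e.strictMono fun i => hZ _ (he i)
  have hc_mono : StrictMono c := fun i j hij =>
    calc c i < e i.succ := (hc i).2
      _ ≤ e j.castSucc := e.monotone (Fin.succ_le_castSucc_iff.mpr hij)
      _ < c j := (hc j).1
  refine ⟨Finset.univ.image c, ?_, ?_, ?_, ?_⟩
  · rw [Finset.card_image_of_injective _ hc_mono.injective, Finset.card_univ, Fintype.card_fin,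
      hn, Nat.add_sub_cancel]
  · rw [Finset.disjoint_left]
    rintro _ hci hciZ
    obtain ⟨i, -, rfl⟩ := Finset.mem_image.mp hci
    obtain ⟨k, hk⟩ : c i ∈ Set.range e := by rwa [Finset.range_orderEmbOfFin]
    have h₁ := e.lt_iff_lt.mp (hk ▸ (hc i).1)
    have h₂ := e.lt_iff_lt.mp (hk ▸ (hc i).2)
    exact (Fin.succ_le_or_le_castSucc k i).elim (fun h => h.not_gt h₂) fun h => h.not_gt h₁
  · simp only [Finset.mem_image, Finset.mem_univ, true_and, forall_exists_index,
      forall_apply_eq_imp_iff]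
    exact fun i => ⟨_, he _, _, he _, hc i⟩
  · simpa using hc0

theorem exists_iteratedDeriv_eq_zero_of_card_lt {S : Set ℝ} (hS : S.OrdConnected) {n : ℕ}
    {f : ℝ → ℝ} (hf : ContDiff ℝ n f) {Z : Finset ℝ} (hZS : ↑Z ⊆ S) (hZ : n < #Z)
    (hf₀ : ∀ z ∈ Z, f z = 0) : ∃ c ∈ S, iteratedDeriv n f c = 0 := by
  induction n generalizing f Z with
  | zero =>
    obtain ⟨z, hz⟩ := Finset.card_pos.mp hZ
    exact ⟨z, hZS hz, by simpa using hf₀ z hz⟩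
  | succ n ih =>
    obtain ⟨Z', hZ'card, -, hZ'between, hZ'₀⟩ :=
      Z.exists_deriv_eq_zero (hf.differentiable (by simp)) hf₀
    have hZ'S : ↑Z' ⊆ S := fun c hc => by
      obtain ⟨z₁, hz₁, z₂, hz₂, hc⟩ := hZ'between c hc
      exact hS.out (hZS hz₁) (hZS hz₂) (Ioo_subset_Icc_self hc)
    obtain ⟨c, hc, hc₀⟩ := ih hf.deriv' hZ'S (by omega) hZ'₀
    exact ⟨c, hc, by rwa [iteratedDeriv_succ']⟩

theorem exists_iteratedDeriv_eq_zero_of_double_zeros {a b : ℝ} {n : ℕ} (hn : n ≠ 0)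
    {f : ℝ → ℝ} (hf : ContDiff ℝ n f) {Z T : Finset ℝ} (hZ : ↑Z ⊆ Icc a b) (hT : ↑T ⊆ Ioo a b)
    (hTZ : T ⊆ Z) (hcard : n + 1 ≤ #Z + #T) (hf₀ : ∀ z ∈ Z, f z = 0)
    (hf₁ : ∀ z ∈ T, deriv f z = 0) : ∃ c ∈ Ioo a b, iteratedDeriv n f c = 0 := by
  obtain ⟨m, rfl⟩ := Nat.exists_eq_succ_of_ne_zero hn
  obtain ⟨Z', hZ'card, hZ'Z, hZ'between, hZ'₀⟩ :=
    Z.exists_deriv_eq_zero (hf.differentiable (by simp)) hf₀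
  have hZ'T : ↑(Z' ∪ T) ⊆ Ioo a b := by
    rw [Finset.coe_union, Set.union_subset_iff]
    refine ⟨fun c hc => ?_, hT⟩
    obtain ⟨z₁, hz₁, z₂, hz₂, hc⟩ := hZ'between c hc
    exact ⟨(hZ hz₁).1.trans_lt hc.1, hc.2.trans_le (hZ hz₂).2⟩
  have hcard' : m < #(Z' ∪ T) := by
    rw [Finset.card_union_of_disjoint (hZ'Z.mono_right hTZ)]
    have := Finset.card_le_card hTZ
    omega
  have hderiv₀ : ∀ z ∈ Z' ∪ T, deriv f z = 0 := fun z hz =>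
    (Finset.mem_union.mp hz).elim (hZ'₀ z) (hf₁ z)
  obtain ⟨c, hc, hc₀⟩ :=
    exists_iteratedDeriv_eq_zero_of_card_lt ordConnected_Ioo hf.deriv' hZ'T hcard' hderiv₀
  exact ⟨c, hc, by rwa [iteratedDeriv_succ']⟩

section HermiteRemainder

variable {ι : Type*} [Fintype ι] {t : ι → ℝ} {a b : ℝ} {f : ℝ → ℝ} {H : ℝ[X]}

theorem exists_iteratedDeriv_eq_of_interpolates [Nonempty ι] (ht : Function.Injective t)
    (ht_mem : ∀ i, t i ∈ Ioo a b) (hf : ContDiff ℝ (2 * Fintype.card ι) f)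
    {q : ℝ[X]} (hval : ∀ i, q.eval (t i) = f (t i))
    (hder : ∀ i, q.derivative.eval (t i) = deriv f (t i)) {x : ℝ} (hx : x ∈ Icc a b)
    (hxt : ∀ i, t i ≠ x) (hqx : q.eval x = f x) :
    ∃ ξ ∈ Ioo a b, iteratedDeriv (2 * Fintype.card ι) f ξ =
      iteratedDeriv (2 * Fintype.card ι) (fun y => q.eval y) ξ := by
  set n := 2 * Fintype.card ι
  set g : ℝ → ℝ := fun y => f y - q.eval y
  have hg : ContDiff ℝ n g := hf.sub (q.contDiff_eval _)
  have hg₀ : ∀ z ∈ insert x (Finset.univ.image t), g z = 0 := by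
    simp only [Finset.mem_insert, Finset.mem_image, Finset.mem_univ, true_and]
    rintro z (rfl | ⟨i, rfl⟩)
    · exact sub_eq_zero.mpr hqx.symm
    · exact sub_eq_zero.mpr (hval i).symm
  have hg₁ : ∀ z ∈ Finset.univ.image t, deriv g z = 0 := by
    simp only [Finset.mem_image, Finset.mem_univ, true_and]
    rintro z ⟨i, rfl⟩
    rw [deriv_fun_sub (hf.differentiable (by simp) _) q.differentiable.differentiableAt,
      Polynomial.deriv, hder, sub_self]
  have hT : ↑(Finset.univ.image t) ⊆ Ioo a b := by
    simpa [Set.range_subset_iff] using ht_mem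
  have hZ : ↑(insert x (Finset.univ.image t)) ⊆ Icc a b := by
    rw [Finset.coe_insert]
    exact Set.insert_subset hx (hT.trans Ioo_subset_Icc_self)
  have hcard : n + 1 ≤ #(insert x (Finset.univ.image t)) + #(Finset.univ.image t) := by
    rw [Finset.card_insert_of_notMem (by simpa using hxt),
      Finset.card_image_of_injective _ ht, Finset.card_univ]
    omega
  obtain ⟨ξ, hξ, hgξ⟩ := exists_iteratedDeriv_eq_zero_of_double_zeros (by positivity) hg hZ hT
    (Finset.subset_insert _ _) hcard hg₀ hg₁
  rw [iteratedDeriv_fun_sub hf.contDiffAt (q.contDiff_eval _).contDiffAt, sub_eq_zero] at hgξ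
  exact ⟨ξ, hξ, hgξ⟩

theorem exists_sub_eval_eq_iteratedDeriv_mul_nodal_sq [Nonempty ι] (ht : Function.Injective t)
    (ht_mem : ∀ i, t i ∈ Ioo a b) (hf : ContDiff ℝ (2 * Fintype.card ι) f)
    (hH : H.degree < ↑(2 * Fintype.card ι)) (hval : ∀ i, H.eval (t i) = f (t i))
    (hder : ∀ i, H.derivative.eval (t i) = deriv f (t i)) {x : ℝ} (hx : x ∈ Icc a b) :
    ∃ ξ ∈ Ioo a b, f x - H.eval x =
      iteratedDeriv (2 * Fintype.card ι) f ξ / (2 * Fintype.card ι)! *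
        (Lagrange.nodal Finset.univ t).eval x ^ 2 := by
  set n := 2 * Fintype.card ι
  set W := Lagrange.nodal Finset.univ t ^ 2
  have hW_node (i : ι) : W.eval (t i) = 0 := by
    simp [W, Lagrange.eval_nodal_at_node (Finset.mem_univ i)]
  by_cases hxt : ∃ i, t i = x
  · obtain ⟨i, rfl⟩ := hxt
    exact ⟨t i, ht_mem i, by simp [hval, Lagrange.eval_nodal_at_node (Finset.mem_univ i)]⟩
  push Not at hxt
  have hWx : W.eval x ≠ 0 := by
    simpa [W] using Lagrange.eval_nodal_not_at_node fun i _ => (hxt i).symm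
  -- adding a multiple of `W` keeps the conditions at the nodes and matches `f` at `x`
  set c := (f x - H.eval x) / W.eval x
  set q := H + C c * W
  obtain ⟨ξ, hξ, hfξ⟩ := exists_iteratedDeriv_eq_of_interpolates ht ht_mem hf (q := q)
    (by simp [q, hval, hW_node]) (by simp [q, W, hder, eval_derivative_nodal_sq]) hx hxt
    (by simp [q, c, div_mul_cancel₀ _ hWx])
  have hq_coeff : q.coeff n = c := by
    have hW : W.coeff n = 1 := by
      have := (Lagrange.nodal_monic (s := Finset.univ) (v := t)).pow 2
      rwa [Monic, leadingCoeff, natDegree_nodal_sq] at this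
    rw [coeff_add, coeff_C_mul, coeff_eq_zero_of_degree_lt hH, hW, zero_add, mul_one]
  have hq_deg : q.natDegree ≤ n :=
    (natDegree_add_le _ _).trans <| max_le (natDegree_le_of_degree_le hH.le)
      ((natDegree_C_mul_le _ _).trans natDegree_nodal_sq.le)
  refine ⟨ξ, hξ, ?_⟩
  rw [hfξ, iteratedDeriv_eval_of_natDegree_le hq_deg, hq_coeff,
    mul_div_cancel_left₀ _ (by positivity), ← eval_pow]
  exact (div_mul_cancel₀ _ hWx).symm

theorem eval_le_of_iteratedDeriv_nonneg [Nonempty ι] (ht : Function.Injective t)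
    (ht_mem : ∀ i, t i ∈ Ioo a b) (hf : ContDiff ℝ (2 * Fintype.card ι) f)
    (hf_nonneg : ∀ x ∈ Ioo a b, 0 ≤ iteratedDeriv (2 * Fintype.card ι) f x)
    (hH : H.degree < ↑(2 * Fintype.card ι)) (hval : ∀ i, H.eval (t i) = f (t i))
    (hder : ∀ i, H.derivative.eval (t i) = deriv f (t i)) {x : ℝ} (hx : x ∈ Icc a b) :
    H.eval x ≤ f x := by
  obtain ⟨ξ, hξ, h⟩ := exists_sub_eval_eq_iteratedDeriv_mul_nodal_sq ht ht_mem hf hH hval hder hx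
  rw [← sub_nonneg, h]
  exact mul_nonneg (div_nonneg (hf_nonneg ξ hξ) (by positivity)) (sq_nonneg _)

end HermiteRemainder

theorem gaussJacobi_le_of_nonneg_high_deriv_general
    (a b : ℝ) (s : ℕ) (hs : 1 ≤ s)
    (ν : Measure ℝ) [IsFiniteMeasure ν] (hν_supp : ν (Set.Icc a b)ᶜ = 0)
    (t : Fin s → ℝ) (ht_inj : Function.Injective t) (ht_mem : ∀ j, t j ∈ Set.Ioo a b)
    (α : Fin s → ℝ)
    (hexact : ∀ p : Polynomial ℝ, p.natDegree ≤ 2 * s - 1 →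
      ∑ j, α j * p.eval (t j) = ∫ x, p.eval x ∂ν)
    (f : ℝ → ℝ) (hf : ContDiff ℝ (2 * s) f)
    (hf'' : ∀ x ∈ Set.Ioo a b, 0 ≤ iteratedDeriv (2 * s) f x) :
    ∑ j, α j * f (t j) ≤ ∫ x, f x ∂ν := by
  have : Nonempty (Fin s) := ⟨⟨0, hs⟩⟩
  obtain ⟨H, hH, hval, hder⟩ :=
    exists_hermite_interpolant ht_inj (fun j => f (t j)) (fun j => deriv f (t j))
  rw [Fintype.card_fin] at hH
  have hHf : ∀ x ∈ Icc a b, H.eval x ≤ f x := fun x hx =>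
    eval_le_of_iteratedDeriv_nonneg (ι := Fin s) ht_inj ht_mem (by simpa using hf)
      (by simpa using hf'') (by simpa using hH) hval hder hx
  have hH_natDegree : H.natDegree ≤ 2 * s - 1 :=
    natDegree_le_pred (natDegree_le_of_degree_le hH.le) (coeff_eq_zero_of_degree_lt hH)
  have hae : ∀ᵐ x ∂ν, x ∈ Icc a b := ae_iff.mpr hν_supp
  have hint : ∀ g : ℝ → ℝ, Continuous g → Integrable g ν := fun g hg => by
    simpa only [IntegrableOn, Measure.restrict_eq_self_of_ae_mem hae] using
      hg.continuousOn.integrableOn_compact (μ := ν) (isCompact_Icc (a := a) (b := b))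
  calc ∑ j, α j * f (t j) = ∑ j, α j * H.eval (t j) := by simp only [hval]
    _ = ∫ x, H.eval x ∂ν := hexact H hH_natDegree
    _ ≤ ∫ x, f x ∂ν :=
      integral_mono_ae (hint _ H.continuous) (hint f hf.continuous) (hae.mono hHf)

/-- Chebyshev–Markov extremal property of the Gauss–Jacobi quadrature: if `ν` is a
non-negative measure on `[a,b]` whose support has more than `s` points, with Gauss–Jacobi
quadrature `ν^{(s)} = Σ α_j δ_{t_j}` (nodes in `(a,b)`, positive weights, exact on polynomials
of degree `≤ 2s-1`), then `∫ f dν^{(s)} ≤ ∫ f dν` for every `2s`-times continuously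
differentiable `f` with `f^{(2s)} ≥ 0` on `(a,b)`. -/
theorem gaussJacobi_le_of_nonneg_high_deriv
    (a b : ℝ) (hab : a < b) (s : ℕ) (hs : 1 ≤ s)
    (ν : Measure ℝ) [IsFiniteMeasure ν] (hν_supp : ν (Set.Icc a b)ᶜ = 0)
    (hbig : ¬ ∃ S : Finset ℝ, S.card ≤ s ∧ ν ((S : Set ℝ))ᶜ = 0)
    (t : Fin s → ℝ) (ht_inj : Function.Injective t) (ht_mem : ∀ j, t j ∈ Set.Ioo a b)
    (α : Fin s → ℝ) (hα : ∀ j, 0 < α j)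
    (hexact : ∀ p : Polynomial ℝ, p.natDegree ≤ 2 * s - 1 →
      ∑ j, α j * p.eval (t j) = ∫ x, p.eval x ∂ν)
    (f : ℝ → ℝ) (hf : ContDiff ℝ (2 * s) f)
    (hf'' : ∀ x ∈ Set.Ioo a b, 0 ≤ iteratedDeriv (2 * s) f x) :
    ∑ j, α j * f (t j) ≤ ∫ x, f x ∂ν :=
  gaussJacobi_le_of_nonneg_high_deriv_general a b s hs ν hν_supp t ht_inj ht_mem α hexact f hf hf''
end

section
/- Let d = 1 and define T : ℂ[x] → ℂ by T(f) = ∫_a^b f(x) dσ(x) − ∫_a^b f(−x) dσ(x), where σ is a non-zero non-negative finite measure on [a,b] with 0 < a < b. Then T(p*(x²)p(x²)) ≥ 0 and T(x·p*(x²)p(x²)) ≥ 0 for all p ∈ ℂ[x] (T is pseudo-positive definite), but T is not positive definite: T(1) = 0 while T ≠ 0, so there is a polynomial q with T(q*q) possibly positive yet T fails positive definiteness since T vanishes on even polynomials. -/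
open MeasureTheory ComplexOrder Polynomial

private lemma integrable_cont_aux (a b : ℝ) (σ : Measure ℝ) [IsFiniteMeasure σ]
    (hσ_supp : σ (Set.Icc a b)ᶜ = 0) {E : Type*} [NormedAddCommGroup E]
    (g : ℝ → E) (hg : Continuous g) : Integrable g σ := by
  obtain ⟨C, hC⟩ := (isCompact_Icc (a := a) (b := b)).exists_bound_of_continuousOn
    hg.continuousOn
  have hmem : ∀ᵐ x ∂σ, x ∈ Set.Icc a b := by
    rw [ae_iff, show {x : ℝ | ¬ x ∈ Set.Icc a b} = (Set.Icc a b)ᶜ from rfl]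
    exact hσ_supp
  refine ⟨hg.aestronglyMeasurable, HasFiniteIntegral.of_bounded (C := C) ?_⟩
  filter_upwards [hmem] with x hx using hC x hx

private lemma eval_map_star_real (p : Polynomial ℂ) (z : ℂ) (hz : star z = z) :
    (p.map (starRingEnd ℂ)).eval z = star (p.eval z) := by
  conv_lhs => rw [← hz]
  rw [Polynomial.eval_map]
  exact Polynomial.eval₂_hom _ _

private lemma integral_ofReal_C (f : ℝ → ℝ) (μ : Measure ℝ) :
    ∫ x, ((f x : ℂ)) ∂μ = ((∫ x, f x ∂μ : ℝ) : ℂ) :=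
  integral_ofReal

/-- The univariate example: `T(f) = ∫ₐᵇ f(x) dσ − ∫ₐᵇ f(−x) dσ` with `0 < a < b` and `σ ≠ 0`
a finite non-negative measure on `[a,b]` is pseudo-positive definite
(`T(p*(x²)p(x²)) ≥ 0` and `T(x·p*(x²)p(x²)) ≥ 0`), but not positive definite:
`T(1) = 0` while `T ≠ 0`, and indeed `T(q* q) < 0` for some `q`. -/
theorem univariate_pseudoPositive_not_positive
    (a b : ℝ) (ha : 0 < a) (hab : a < b)
    (σ : Measure ℝ) [IsFiniteMeasure σ] (hσ_supp : σ (Set.Icc a b)ᶜ = 0) (hσ_ne : σ ≠ 0)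
    (T : Polynomial ℂ → ℂ)
    (hT : ∀ f : Polynomial ℂ,
      T f = (∫ x : ℝ, f.eval (x : ℂ) ∂σ) - ∫ x : ℝ, f.eval (-(x : ℂ)) ∂σ) :
    (∀ p : Polynomial ℂ,
      0 ≤ T (((p.map (starRingEnd ℂ)) * p).comp ((X : Polynomial ℂ) ^ 2)) ∧
      0 ≤ T ((X : Polynomial ℂ) *
              ((p.map (starRingEnd ℂ)) * p).comp ((X : Polynomial ℂ) ^ 2))) ∧
    T 1 = 0 ∧
    (∃ f : Polynomial ℂ, T f ≠ 0) ∧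
    ¬ (∀ q : Polynomial ℂ, 0 ≤ T ((q.map (starRingEnd ℂ)) * q)) := by
  have hmem : ∀ᵐ x ∂σ, x ∈ Set.Icc a b := by
    rw [ae_iff, show {x : ℝ | ¬ x ∈ Set.Icc a b} = (Set.Icc a b)ᶜ from rfl]
    exact hσ_supp
  -- the first moment is positive
  have hid : Integrable (fun x : ℝ => x) σ :=
    integrable_cont_aux a b σ hσ_supp _ continuous_id
  have hm : 0 < ∫ x : ℝ, x ∂σ := by
    have h1 : ∫ x : ℝ, x ∂σ ≥ ∫ _ : ℝ, a ∂σ := by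
      refine integral_mono_ae (integrable_const a) hid ?_
      filter_upwards [hmem] with x hx using hx.1
    have h2 : (0:ℝ) < ∫ _ : ℝ, a ∂σ := by
      rw [integral_const, smul_eq_mul]
      have hpos : 0 < σ Set.univ := Measure.measure_univ_pos.mpr hσ_ne
      have ht : 0 < (σ Set.univ).toReal := ENNReal.toReal_pos hpos.ne' (measure_ne_top σ _)
      exact mul_pos ht ha
    linarith
  refine ⟨?_, ?_, ?_, ?_⟩
  · intro p
    set g : Polynomial ℂ := ((p.map (starRingEnd ℂ)) * p).comp ((X : Polynomial ℂ) ^ 2)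
      with hg
    have hgeval : ∀ x : ℝ, g.eval (-(x:ℂ)) = g.eval (x:ℂ) := by
      intro x
      simp [hg, eval_comp, neg_sq]
    constructor
    · rw [hT g]
      simp only [hgeval]
      simp
    · -- odd part
      have heval : ∀ x : ℝ, ((X : Polynomial ℂ) * g).eval (x:ℂ) =
          ((x * Complex.normSq (p.eval ((x:ℂ)^2)) : ℝ) : ℂ) := by
        intro x
        have hst : star ((x:ℂ)^2) = (x:ℂ)^2 := by
          simp [← Complex.ofReal_pow]
        have hgx : g.eval (x:ℂ) = star (p.eval ((x:ℂ)^2)) * p.eval ((x:ℂ)^2) := by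
          simp [hg, eval_comp, eval_map_star_real _ _ hst]
        rw [eval_mul, eval_X, hgx, Complex.star_def,
          mul_comm ((starRingEnd ℂ) (p.eval ((x:ℂ)^2))), Complex.mul_conj]
        push_cast
        ring
      have heval' : ∀ x : ℝ, ((X : Polynomial ℂ) * g).eval (-(x:ℂ)) =
          -((x * Complex.normSq (p.eval ((x:ℂ)^2)) : ℝ) : ℂ) := by
        intro x
        rw [eval_mul, eval_X, hgeval, ← heval x, eval_mul, eval_X]
        ring
      have hJ : (0:ℝ) ≤ ∫ x : ℝ, x * Complex.normSq (p.eval ((x:ℂ)^2)) ∂σ := by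
        refine integral_nonneg_of_ae ?_
        filter_upwards [hmem] with x hx
        have hx0 : (0:ℝ) ≤ x := le_trans ha.le hx.1
        exact mul_nonneg hx0 (Complex.normSq_nonneg _)
      have e1 : ∫ x : ℝ, ((X : Polynomial ℂ) * g).eval (x:ℂ) ∂σ =
          ((∫ x : ℝ, x * Complex.normSq (p.eval ((x:ℂ)^2)) ∂σ : ℝ) : ℂ) := by
        simp only [heval]
        exact integral_ofReal_C _ _
      have e2 : ∫ x : ℝ, ((X : Polynomial ℂ) * g).eval (-(x:ℂ)) ∂σ =
          -((∫ x : ℝ, x * Complex.normSq (p.eval ((x:ℂ)^2)) ∂σ : ℝ) : ℂ) := by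
        simp only [heval']
        rw [integral_neg, integral_ofReal_C]
      rw [hT, e1, e2, sub_neg_eq_add, ← Complex.ofReal_add, Complex.zero_le_real]
      linarith
  · rw [hT 1]; simp
  · refine ⟨X, ?_⟩
    rw [hT X]
    simp only [eval_X]
    rw [integral_neg, integral_ofReal_C, sub_neg_eq_add, ← Complex.ofReal_add]
    simp only [ne_eq, Complex.ofReal_eq_zero]
    intro h
    linarith
  · intro h
    have hq := h (1 - X)
    have hmap : ((1 - X : Polynomial ℂ).map (starRingEnd ℂ)) = 1 - X := by
      simp
    rw [hmap, hT] at hq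
    have h1 : ∀ x : ℝ, ((1 - X : Polynomial ℂ) * (1 - X)).eval (x:ℂ) =
        (((1 - x)^2 : ℝ) : ℂ) := by
      intro x; push_cast; simp; ring
    have h2 : ∀ x : ℝ, ((1 - X : Polynomial ℂ) * (1 - X)).eval (-(x:ℂ)) =
        (((1 + x)^2 : ℝ) : ℂ) := by
      intro x; push_cast; simp; ring
    simp only [h1, h2] at hq
    rw [integral_ofReal_C, integral_ofReal_C, ← Complex.ofReal_sub,
      Complex.zero_le_real] at hq
    have hi1 : Integrable (fun x : ℝ => (1 - x)^2) σ :=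
      integrable_cont_aux a b σ hσ_supp _ (by continuity)
    have hi2 : Integrable (fun x : ℝ => (1 + x)^2) σ :=
      integrable_cont_aux a b σ hσ_supp _ (by continuity)
    rw [← integral_sub hi1 hi2] at hq
    have hfun : (fun x : ℝ => (1 - x)^2 - (1 + x)^2) = fun x : ℝ => (-4) * x := by
      funext x; ring
    rw [hfun, integral_const_mul] at hq
    nlinarith
end

section
/- For d = 2 and α = 2, let μ be the measure on ℝ² with density w(re^{it}) = (1−r²)·P(re^{it}) for 0 ≤ r < 1 and 0 for r ≥ 1, where P is the Poisson kernel. Then for every k ≥ 1 the component measure μ_{k,1} (with respect to Y_{k,1}(re^{it}) = (1/√π) r^k cos kt) satisfies ∫ r^{−k} dμ_{k,1}(r) = 2√π ∫_0^1 r^{k+1}(1−r²) dr = 4√π/((k+2)(k+4)), and hence Σ_k ∫ r^{−k} dμ_{k,1} < ∞. -/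
/-!
The angular integral defining `w k r` pairs the Poisson kernel at `r` with `cos (k t)`, the
restriction of the harmonic function `Re z^k` to the unit circle; by the Poisson integral formula
it equals `2π r^k`. Hence `w k r = 2√π r^k (1 - r²)` on `[0, 1)`, the weight `r^{-k}`
cancels, and what remains is the polynomial integral `2√π ∫₀¹ r^{k+1}(1 - r²) dr`, of order
`k⁻²`.
-/

open MeasureTheory Real Metric InnerProductSpace Set

lemma poissonKernel_zero_circleMap_one (r t : ℝ) :
    poissonKernel 0 r (circleMap 0 1 t) = (1 - r ^ 2) / (1 - 2 * r * cos t + r ^ 2) := by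
  have hdist : ‖circleMap 0 1 t - r‖ ^ 2 = 1 - 2 * r * cos t + r ^ 2 := by
    rw [← Complex.normSq_eq_norm_sq, Complex.normSq_apply]
    simp [circleMap_zero, Complex.exp_ofReal_mul_I_re, Complex.exp_ofReal_mul_I_im]
    nlinarith [sin_sq_add_cos_sq t]
  simp [poissonKernel_def, hdist]

lemma re_circleMap_zero_one_pow (k : ℕ) (t : ℝ) : (circleMap 0 1 t ^ k).re = cos (k * t) := by
  rw [circleMap_zero_pow, circleMap_zero, one_pow, Complex.ofReal_one, one_mul,
    Complex.exp_ofReal_mul_I_re]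

lemma integral_poissonKernel_mul_cos {r : ℝ} (hr : |r| < 1) (k : ℕ) :
    ∫ t in 0..2 * π, (1 - r ^ 2) / (1 - 2 * r * cos t + r ^ 2) * cos (k * t) =
      2 * π * r ^ k := by
  have harmonic : HarmonicOnNhd (fun z : ℂ ↦ (z ^ k).re) (closedBall 0 1) :=
    fun _ _ ↦ (analyticAt_id.pow k).harmonicAt_re
  have hr_mem : (r : ℂ) ∈ ball (0 : ℂ) 1 := by simpa using hr
  have poisson := harmonic.circleAverage_poissonKernel_smul hr_mem
  simp only [circleAverage_def, smul_eq_mul, Pi.mul_apply, poissonKernel_zero_circleMap_one,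
    re_circleMap_zero_one_pow, ← Complex.ofReal_pow, Complex.ofReal_re] at poisson
  rw [← poisson]
  field_simp

lemma integral_poisson_density_mul_cos {r : ℝ} (hr : |r| < 1) (k : ℕ) :
    ∫ t in 0..2 * π, (1 - r ^ 2) * ((1 - r ^ 2) / (1 - 2 * r * cos t + r ^ 2)) *
        ((1 / √π) * cos (k * t)) = 2 * √π * (r ^ k * (1 - r ^ 2)) := by
  calc _ = (1 - r ^ 2) / √π *
        ∫ t in 0..2 * π, (1 - r ^ 2) / (1 - 2 * r * cos t + r ^ 2) * cos (k * t) := by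
        rw [← intervalIntegral.integral_const_mul]
        congr 1 with t
        ring
    _ = 2 * √π * (r ^ k * (1 - r ^ 2)) := by
        rw [integral_poissonKernel_mul_cos hr]
        field_simp
        rw [sq_sqrt pi_nonneg]

lemma integral_zpow_neg_mul_pow_succ_mul {k : ℕ} {v g : ℝ → ℝ} {c : ℝ}
    (hv : ∀ r ∈ Ioo (0 : ℝ) 1, v r = c * (r ^ k * g r)) :
    ∫ r in (0 : ℝ)..1, r ^ (-(k : ℤ)) * (r ^ (k + 1) * v r) =
      c * ∫ r in (0 : ℝ)..1, r ^ (k + 1) * g r := by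
  rw [← intervalIntegral.integral_const_mul]
  refine intervalIntegral.integral_congr_Ioo_of_le zero_le_one fun r hr ↦ ?_
  have : r ^ k ≠ 0 := pow_ne_zero _ hr.1.ne'
  rw [hv r hr, zpow_neg, zpow_natCast]
  field_simp

lemma integral_pow_succ_mul_one_sub_sq (k : ℕ) :
    ∫ r in (0 : ℝ)..1, r ^ (k + 1) * (1 - r ^ 2) = 2 / (((k : ℝ) + 2) * ((k : ℝ) + 4)) := by
  have hsplit (r : ℝ) : r ^ (k + 1) * (1 - r ^ 2) = r ^ (k + 1) - r ^ (k + 3) := by ring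
  simp_rw [hsplit]
  rw [intervalIntegral.integral_sub (intervalIntegral.intervalIntegrable_pow _)
    (intervalIntegral.intervalIntegrable_pow _), integral_pow, integral_pow]
  push_cast
  field_simp
  ring

lemma summable_one_div_nat_add_mul_nat_add {a b : ℝ} (ha : 1 ≤ a) (hb : 1 ≤ b) :
    Summable fun n : ℕ ↦ 1 / ((n + a) * (n + b)) := by
  have hpseries : Summable fun n : ℕ ↦ 1 / ((n : ℝ) + 1) ^ 2 := by
    exact_mod_cast (summable_nat_add_iff 1).mpr (summable_one_div_nat_pow.mpr one_lt_two)
  refine hpseries.of_nonneg_of_le (fun n ↦ ?_) fun n ↦ ?_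
  · have : (0 : ℝ) < (n + a) * (n + b) := by positivity
    positivity
  · apply one_div_le_one_div_of_le (by positivity)
    rw [sq]
    gcongr

/-- For `d = 2`, the measure with density `w(re^{it}) = (1-r²) P(re^{it})` on the unit disc
(`P` the Poisson kernel) has component measures `dμ_{k,1}(r) = r^{k+1} w_{k,1}(r) dr` (with
respect to `Y_{k,1}(re^{it}) = π^{-1/2} r^k cos kt`) satisfying
`∫ r^{-k} dμ_{k,1} = 2√π ∫₀¹ r^{k+1}(1-r²) dr = 4√π/((k+2)(k+4))`, and these quantities are
summable in `k`. -/
theorem poisson_density_component_integrals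
    (w : ℕ → ℝ → ℝ)
    (hw : ∀ (k : ℕ) (r : ℝ), 0 ≤ r → r < 1 →
      w k r = ∫ t in (0:ℝ)..(2 * π),
        (1 - r ^ 2) * ((1 - r ^ 2) / (1 - 2 * r * Real.cos t + r ^ 2)) *
          ((1 / Real.sqrt π) * Real.cos (k * t))) :
    (∀ k : ℕ, 1 ≤ k →
      (∫ r in (0:ℝ)..1, (r : ℝ) ^ (-(k : ℤ)) * (r ^ (k + 1) * w k r))
        = 2 * Real.sqrt π * ∫ r in (0:ℝ)..1, r ^ (k + 1) * (1 - r ^ 2) ∧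
      (∫ r in (0:ℝ)..1, (r : ℝ) ^ (-(k : ℤ)) * (r ^ (k + 1) * w k r))
        = 4 * Real.sqrt π / (((k : ℝ) + 2) * ((k : ℝ) + 4))) ∧
    Summable (fun k : ℕ =>
      ∫ r in (0:ℝ)..1, (r : ℝ) ^ (-((k : ℤ) + 1)) * (r ^ (k + 2) * w (k + 1) r)) := by
  have component (k : ℕ) :
      ∫ r in (0:ℝ)..1, r ^ (-(k : ℤ)) * (r ^ (k + 1) * w k r) =
        2 * √π * ∫ r in (0:ℝ)..1, r ^ (k + 1) * (1 - r ^ 2) :=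
    integral_zpow_neg_mul_pow_succ_mul fun r hr ↦ by
      have hr_abs : |r| < 1 := by rw [abs_of_pos hr.1]; exact hr.2
      rw [hw k r hr.1.le hr.2, integral_poisson_density_mul_cos hr_abs]
  have component_closed_form (k : ℕ) :
      ∫ r in (0:ℝ)..1, r ^ (-(k : ℤ)) * (r ^ (k + 1) * w k r) =
        4 * √π / (((k : ℝ) + 2) * ((k : ℝ) + 4)) := by
    rw [component, integral_pow_succ_mul_one_sub_sq]
    ring
  refine ⟨fun k _ ↦ ⟨component k, component_closed_form k⟩, ?_⟩
  have hsummable := (summable_one_div_nat_add_mul_nat_add (a := 3) (b := 5) (by norm_num)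
    (by norm_num)).mul_left (4 * √π)
  refine hsummable.congr fun k ↦ ?_
  have := component_closed_form (k + 1)
  push_cast at this
  rw [this]
  ring
end
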